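/- arXiv:2510.05360 — 4 statements merged into one kernel-verified Lean document; each statement's English description precedes it below -/
import Mathlib

section
/- Let H be a real Hilbert space, A : H → H a continuous linear self-adjoint operator with ⟨Au, u⟩ ≥ c₀‖u‖² for all u ∈ H and some c₀ > 0, N : H → H an arbitrary map, γ > 0, k > 0, and F : ℕ → H with ‖Fₙ‖ ≤ M for all n. Suppose the sequences u : ℕ → H and q : ℕ → ℝ satisfy, for all n ≥ 1, the mean-reverting SAV-BDF2 scheme: (3u_{n+1} − 4u_n + u_{n−1})/(2k) + A u_{n+1} + q_{n+1} · N(2u_n − u_{n−1}) = F_{n+1} and (3q_{n+1} − 4q_n + q_{n−1})/(2k) + γ q_{n+1} − ⟨N(2u_n − u_{n−1}), u_{n+1}⟩ = γ. Then there exist constants C > 0, θ₀ > 0, R₀ > 0 depending only on c₀, γ, and M (independent of k, A, N, and the sequences) such that for all n ≥ 1, ‖(u_{n+1}, u_n)‖_G² + ‖(q_{n+1}, q_n)‖_G² ≤ C (1 + θ₀ l_k)^{−n} (‖(u₁, u₀)‖_G² + ‖(q₁, q₀)‖_G²) + R₀², where l_k = min(k, 1). -/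
open scoped RealInnerProductSpace

/-!
Testing the `u`-equation with `u (n+1)` and the `q`-equation with `q (n+1)`, the nonlinear
terms `± q (n+1) ⟪N (2 u n - u (n-1)), u (n+1)⟫` cancel: this is the point of the scalar
auxiliary variable. G-stability of BDF2 and Young's inequality then give the one-step estimate
`Eₙ₊₁ + k β Xₙ₊₂ ≤ Eₙ + k R` for the G-energy `Eₙ` and `Xₙ = ‖uₙ‖² + qₙ²`, with `β`, `R`
depending only on `c₀`, `γ`, `M`. As `Eₙ₊₂ ≤ 7/4 (Xₙ₊₃ + Xₙ₊₂)`, two consecutive steps give the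
contraction `(1 + θ k) Eₙ₊₂ ≤ Eₙ + 2 k R`, and a discrete Grönwall argument concludes.
-/

/-- The G-norm squared of a pair `(u, v)` in a real inner product space,
associated to the matrix `G = (1/4)[[5,−2],[−2,1]]`. -/
noncomputable def gnormSq {H : Type*} [NormedAddCommGroup H] [InnerProductSpace ℝ H]
    (u v : H) : ℝ :=
  (1/4) * (5 * ‖u‖^2 - 4 * ⟪u, v⟫ + ‖v‖^2)

section InnerProductSpace

variable {H : Type*} [NormedAddCommGroup H] [InnerProductSpace ℝ H]

theorem four_mul_gnormSq (u v : H) : 4 * gnormSq u v = ‖u‖^2 + ‖(2:ℝ) • u - v‖^2 := by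
  rw [gnormSq, norm_sub_sq_real, norm_smul, real_inner_smul_left]
  norm_num
  ring

theorem sq_norm_le_four_mul_gnormSq (u v : H) : ‖u‖^2 ≤ 4 * gnormSq u v := by
  rw [four_mul_gnormSq]
  exact le_add_of_nonneg_right (sq_nonneg _)

theorem gnormSq_le (u v : H) : gnormSq u v ≤ 7/4 * (‖u‖^2 + ‖v‖^2) := by
  have h := neg_le_of_abs_le (abs_real_inner_le_norm u v)
  rw [gnormSq]
  nlinarith [sq_nonneg (‖u‖ - ‖v‖)]

-- The defect is `‖a - 2 • b + c‖² / 2`: this is the G-stability of BDF2.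
theorem two_mul_gnormSq_sub_le_inner (a b c : H) :
    2 * (gnormSq a b - gnormSq b c) ≤ ⟪(3:ℝ) • a - (4:ℝ) • b + c, a⟫ := by
  have h : ‖a - (2:ℝ) • b + c‖^2 =
      ‖a‖^2 + 4 * ‖b‖^2 + ‖c‖^2 - 4 * ⟪a, b⟫ + 2 * ⟪a, c⟫ - 4 * ⟪b, c⟫ := by
    simp only [← real_inner_self_eq_norm_sq, inner_sub_left, inner_sub_right, inner_add_left,
      inner_add_right, real_inner_smul_left, real_inner_smul_right, real_inner_comm a b,
      real_inner_comm a c, real_inner_comm b c]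
    ring
  simp only [gnormSq, inner_sub_left, inner_add_left, real_inner_smul_left,
    real_inner_self_eq_norm_sq, real_inner_comm a b, real_inner_comm a c]
  nlinarith [sq_nonneg ‖a - (2:ℝ) • b + c‖]

theorem sav_bdf2_energy_le {k γ : ℝ} (hk : 0 < k) (A : H → H) {a b c w f : H} {p p₁ p₂ : ℝ}
    (hu : (2*k)⁻¹ • ((3:ℝ) • a - (4:ℝ) • b + c) + A a + p • w = f)
    (hq : (3 * p - 4 * p₁ + p₂) / (2*k) + γ * p - ⟪w, a⟫ = γ) :
    gnormSq a b - gnormSq b c + (gnormSq p p₁ - gnormSq p₁ p₂) + k * (⟪A a, a⟫ + γ * p^2)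
      ≤ k * (⟪f, a⟫ + γ * p) := by
  set d := (3:ℝ) • a - (4:ℝ) • b + c
  have hu_a := congrArg (⟪·, a⟫) hu
  simp only [inner_add_left, real_inner_smul_left] at hu_a
  field_simp at hu_a hq
  have hGq := two_mul_gnormSq_sub_le_inner p p₁ p₂
  simp only [Real.inner_apply, smul_eq_mul] at hGq
  have htested : ⟪d, a⟫ + (3 * p - 4 * p₁ + p₂) * p + 2 * k * (⟪A a, a⟫ + γ * p^2)
      = 2 * k * (⟪f, a⟫ + γ * p) := by
    linear_combination hu_a + p * hq
  linarith [two_mul_gnormSq_sub_le_inner a b c]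

theorem sav_bdf2_step_le {k c₀ γ M : ℝ} (hk : 0 < k) (hc₀ : 0 < c₀) (hγ : 0 ≤ γ)
    {A : H → H} {a b c w f : H} {p p₁ p₂ : ℝ} (hA : c₀ * ‖a‖^2 ≤ ⟪A a, a⟫) (hf : ‖f‖ ≤ M)
    (hu : (2*k)⁻¹ • ((3:ℝ) • a - (4:ℝ) • b + c) + A a + p • w = f)
    (hq : (3 * p - 4 * p₁ + p₂) / (2*k) + γ * p - ⟪w, a⟫ = γ) :
    gnormSq a b + gnormSq p p₁ + k * (min c₀ γ / 2) * (‖a‖^2 + ‖p‖^2)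
      ≤ gnormSq b c + gnormSq p₁ p₂ + k * (M^2 / (2 * c₀) + γ / 2) := by
  have henergy := sav_bdf2_energy_le hk A hu hq
  have hfa : ⟪f, a⟫ ≤ c₀ / 2 * ‖a‖^2 + M^2 / (2 * c₀) := by
    have hyoung : M * ‖a‖ ≤ c₀ / 2 * ‖a‖^2 + M^2 / (2 * c₀) := by
      have : c₀ / 2 * ‖a‖^2 + M^2 / (2 * c₀) - M * ‖a‖ = (c₀ * ‖a‖ - M)^2 / (2 * c₀) := by
        field_simp
        ring
      linarith [div_nonneg (sq_nonneg (c₀ * ‖a‖ - M)) (by positivity : (0:ℝ) ≤ 2 * c₀)]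
    calc ⟪f, a⟫ ≤ ‖f‖ * ‖a‖ := real_inner_le_norm f a
      _ ≤ M * ‖a‖ := by gcongr
      _ ≤ _ := hyoung
  have hγp : γ * p ≤ γ / 2 * p^2 + γ / 2 := by nlinarith [mul_nonneg hγ (sq_nonneg (p - 1))]
  have hβ : min c₀ γ / 2 * (‖a‖^2 + ‖p‖^2) ≤ c₀ / 2 * ‖a‖^2 + γ / 2 * p^2 := by
    rw [Real.norm_eq_abs, sq_abs]
    nlinarith [min_le_left c₀ γ, min_le_right c₀ γ, sq_nonneg ‖a‖, sq_nonneg p]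
  nlinarith [mul_le_mul_of_nonneg_left hβ hk.le, mul_le_mul_of_nonneg_left hfa hk.le,
    mul_le_mul_of_nonneg_left hγp hk.le, mul_le_mul_of_nonneg_left hA hk.le]

end InnerProductSpace

section Recurrence

variable {E X : ℕ → ℝ} {k β R : ℝ}

theorem two_step_contraction {θ : ℝ} (hk : 0 ≤ k) (hθ : 0 ≤ θ) (hθβ : 7 * θ ≤ 4 * β)
    (hX : ∀ n, 0 ≤ X n) (hup : ∀ n, E n ≤ 7/4 * (X (n+1) + X n))
    (hstep : ∀ m, E (m+1) + k * β * X (m+2) ≤ E m + k * R) (m : ℕ) :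
    (1 + θ * k) * E (m+2) ≤ E m + 2 * k * R := by
  have hS : 0 ≤ k * (X (m+3) + X (m+2)) := mul_nonneg hk (add_nonneg (hX _) (hX _))
  have hθE : θ * k * E (m+2) ≤ θ * k * (7/4 * (X (m+3) + X (m+2))) :=
    mul_le_mul_of_nonneg_left (hup (m+2)) (mul_nonneg hθ hk)
  nlinarith [hstep m, hstep (m+1)]

theorem energy_one_le (hk : 0 < k) (hβ : 0 < β) (hR : 0 ≤ R) (hX : ∀ n, 0 ≤ X n)
    (hlow : ∀ n, X (n+1) ≤ 4 * E n) (hup : ∀ n, E n ≤ 7/4 * (X (n+1) + X n))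
    (hstep : ∀ m, E (m+1) + k * β * X (m+2) ≤ E m + k * R) :
    E 1 ≤ (7 + 7 / (4 * β)) * E 0 + (1 + 7 / (4 * β)) * R := by
  have hE0 : 0 ≤ E 0 := by linarith [hX 1, hlow 0]
  have hδ : 0 ≤ 7 / (4 * β) := by positivity
  have h₀ := hstep 0
  rcases le_or_gt k 1 with hk1 | hk1
  · have hdiss : 0 ≤ k * β * X 2 := mul_nonneg (mul_nonneg hk.le hβ.le) (hX 2)
    nlinarith [mul_le_mul_of_nonneg_right hk1 hR]
  · -- for `k > 1` the dissipation `k β X₂` controls `E₁` instead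
    have hX2 : β * X 2 ≤ E 0 + R := by
      refine le_of_mul_le_mul_left ?_ hk
      nlinarith [hX 2, hlow 1, mul_le_mul_of_nonneg_right hk1.le hE0]
    have hδX2 : 7/4 * X 2 ≤ 7 / (4 * β) * (E 0 + R) := by
      calc 7/4 * X 2 = 7 / (4 * β) * (β * X 2) := by field_simp
        _ ≤ 7 / (4 * β) * (E 0 + R) := mul_le_mul_of_nonneg_left hX2 hδ
    nlinarith [hup 1, hlow 0]

theorem le_div_pow_add_of_two_step {ρ P K B s : ℝ} (hP : 0 < P) (hρ : P^2 ≤ ρ) (hK : 0 ≤ K)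
    (hs : s ≤ (ρ - 1) * B) (hrec : ∀ m, ρ * E (m+2) ≤ E m + s)
    (h0 : E 0 ≤ K + B) (h1 : E 1 ≤ K / P + B) (n : ℕ) : E n ≤ K / P^n + B := by
  induction n using Nat.twoStepInduction with
  | zero => simpa using h0
  | one => simpa using h1
  | more m ih _ =>
    have hρpos : 0 < ρ := lt_of_lt_of_le (by positivity) hρ
    have hK' : K / P^m ≤ ρ * (K / P^(m+2)) := by
      calc K / P^m = P^2 * (K / P^(m+2)) := by field_simp; ring
        _ ≤ ρ * (K / P^(m+2)) := by gcongr
    refine le_of_mul_le_mul_left ?_ hρpos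
    nlinarith [hrec m]

end Recurrence

theorem exists_uniform_decay_bound {β R : ℝ} (hβ : 0 < β) (hR : 0 < R) :
    ∃ C > (0:ℝ), ∃ θ₀ > (0:ℝ), ∃ R₀ > (0:ℝ), ∀ k : ℝ, 0 < k → ∀ E X : ℕ → ℝ,
      (∀ n, 0 ≤ X n) → (∀ n, X (n+1) ≤ 4 * E n) → (∀ n, E n ≤ 7/4 * (X (n+1) + X n)) →
      (∀ m, E (m+1) + k * β * X (m+2) ≤ E m + k * R) →
      ∀ n, E n ≤ C * E 0 / (1 + θ₀ * min k 1)^n + R₀^2 := by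
  set δ := 7 / (4 * β)
  set θ₀ := min (4 * β / 21) (1/3)
  have hθ₀ : 0 < θ₀ := lt_min (by positivity) (by norm_num)
  have hθ₀β : 7 * (3 * θ₀) ≤ 4 * β := by linarith [min_le_left (4 * β / 21) (1/3)]
  have hθ₀1 : θ₀ ≤ 1/3 := min_le_right _ _
  set B := 2 * R / (3 * θ₀) + (1 + δ) * R
  have hB : 0 < B := by positivity
  refine ⟨2 * (7 + δ), by positivity, θ₀, hθ₀, √B, Real.sqrt_pos.mpr hB, ?_⟩
  intro k hk E X hX hlow hup hstep n
  rw [Real.sq_sqrt hB.le]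
  have hE0 : 0 ≤ E 0 := by linarith [hX 1, hlow 0]
  have hl : 0 < min k 1 := lt_min hk one_pos
  have hθl : θ₀ * min k 1 ≤ 1/3 := by
    nlinarith [hθ₀1, mul_le_mul_of_nonneg_left (min_le_right k 1) hθ₀.le]
  -- one contraction step has to pay for two powers of `1 + θ₀ min k 1`
  have hP : (1 + θ₀ * min k 1)^2 ≤ 1 + 3 * θ₀ * k := by
    nlinarith [mul_le_mul_of_nonneg_left (min_le_left k 1) hθ₀.le, mul_pos hθ₀ hl]
  have hRB : 2 * R ≤ 3 * θ₀ * B := by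
    have : 3 * θ₀ * (2 * R / (3 * θ₀)) = 2 * R := by field_simp
    nlinarith [mul_pos hθ₀ (by positivity : 0 < (1 + δ) * R)]
  refine le_div_pow_add_of_two_step (by positivity) hP (by positivity) ?_
    (two_step_contraction hk.le (by positivity) hθ₀β hX hup hstep) ?_ ?_ n
  · nlinarith [mul_le_mul_of_nonneg_left hRB hk.le]
  · nlinarith [mul_nonneg (by positivity : (0:ℝ) ≤ 13 + 2 * δ) hE0]
  · have h1 : E 1 ≤ (7 + δ) * E 0 + (1 + δ) * R := energy_one_le hk hβ hR.le hX hlow hup hstep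
    have hC₁ : (7 + δ) * E 0 ≤ 2 * (7 + δ) * E 0 / (1 + θ₀ * min k 1) := by
      rw [le_div_iff₀ (by positivity)]
      nlinarith [hθl, mul_nonneg (by positivity : (0:ℝ) ≤ 7 + δ) hE0]
    linarith [(by positivity : (0:ℝ) ≤ 2 * R / (3 * θ₀))]

theorem stmt_3_general {H : Type*} [NormedAddCommGroup H] [InnerProductSpace ℝ H]
    (c₀ γ M : ℝ) (hc₀ : 0 < c₀) (hγ : 0 < γ) :
    ∃ C > (0:ℝ), ∃ θ₀ > (0:ℝ), ∃ R₀ > (0:ℝ),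
      ∀ (k : ℝ), 0 < k →
      ∀ (A : H →L[ℝ] H),
        (∀ x y : H, ⟪A x, y⟫ = ⟪x, A y⟫) →
        (∀ x : H, c₀ * ‖x‖^2 ≤ ⟪A x, x⟫) →
      ∀ (N : H → H) (F : ℕ → H), (∀ n, ‖F n‖ ≤ M) →
      ∀ (u : ℕ → H) (q : ℕ → ℝ),
        (∀ n, 1 ≤ n →
          (2*k)⁻¹ • ((3:ℝ) • u (n+1) - (4:ℝ) • u n + u (n-1)) + A (u (n+1))
            + q (n+1) • N ((2:ℝ) • u n - u (n-1)) = F (n+1)) →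
        (∀ n, 1 ≤ n →
          (3 * q (n+1) - 4 * q n + q (n-1)) / (2*k) + γ * q (n+1)
            - ⟪N ((2:ℝ) • u n - u (n-1)), u (n+1)⟫ = γ) →
        ∀ n, 1 ≤ n →
          gnormSq (u (n+1)) (u n) + gnormSq (q (n+1)) (q n) ≤
            C * (gnormSq (u 1) (u 0) + gnormSq (q 1) (q 0)) / (1 + θ₀ * min k 1)^n
              + R₀^2 := by
  obtain ⟨C, hC, θ₀, hθ₀, R₀, hR₀, hbound⟩ :=
    exists_uniform_decay_bound (β := min c₀ γ / 2) (R := M^2 / (2 * c₀) + γ / 2)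
      (by positivity) (by positivity)
  refine ⟨C, hC, θ₀, hθ₀, R₀, hR₀, fun k hk A _ hA N F hF u q hu hq n _ => ?_⟩
  refine hbound k hk (fun n => gnormSq (u (n+1)) (u n) + gnormSq (q (n+1)) (q n))
    (fun n => ‖u n‖^2 + ‖q n‖^2) (fun n => by positivity)
    (fun n => by linarith [sq_norm_le_four_mul_gnormSq (u (n+1)) (u n),
      sq_norm_le_four_mul_gnormSq (q (n+1)) (q n)])
    (fun n => by linarith [gnormSq_le (u (n+1)) (u n), gnormSq_le (q (n+1)) (q n)])
    (fun m => ?_) n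
  have hstep := sav_bdf2_step_le hk hc₀ hγ.le (hA _) (hF _) (hu (m+1) le_add_self)
    (hq (m+1) le_add_self)
  simp only [Nat.add_sub_cancel] at hstep
  linarith

/-- Unconditional uniform-in-time L² stability of the mean-reverting SAV-BDF2 scheme:
the constants `C`, `θ₀`, `R₀` depend only on `c₀`, `γ`, `M`, and not on the time step `k`,
the operator `A`, the nonlinearity `N`, the forcing `F`, or the sequences `u`, `q`. -/
theorem stmt_3 {H : Type*} [NormedAddCommGroup H] [InnerProductSpace ℝ H]
    (c₀ γ M : ℝ) (hc₀ : 0 < c₀) (hγ : 0 < γ) (hM : 0 ≤ M) :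
    ∃ C > (0:ℝ), ∃ θ₀ > (0:ℝ), ∃ R₀ > (0:ℝ),
      ∀ (k : ℝ), 0 < k →
      ∀ (A : H →L[ℝ] H),
        (∀ x y : H, ⟪A x, y⟫ = ⟪x, A y⟫) →
        (∀ x : H, c₀ * ‖x‖^2 ≤ ⟪A x, x⟫) →
      ∀ (N : H → H) (F : ℕ → H), (∀ n, ‖F n‖ ≤ M) →
      ∀ (u : ℕ → H) (q : ℕ → ℝ),
        (∀ n, 1 ≤ n →
          (2*k)⁻¹ • ((3:ℝ) • u (n+1) - (4:ℝ) • u n + u (n-1)) + A (u (n+1))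
            + q (n+1) • N ((2:ℝ) • u n - u (n-1)) = F (n+1)) →
        (∀ n, 1 ≤ n →
          (3 * q (n+1) - 4 * q n + q (n-1)) / (2*k) + γ * q (n+1)
            - ⟪N ((2:ℝ) • u n - u (n-1)), u (n+1)⟫ = γ) →
        ∀ n, 1 ≤ n →
          gnormSq (u (n+1)) (u n) + gnormSq (q (n+1)) (q n) ≤
            C * (gnormSq (u 1) (u 0) + gnormSq (q 1) (q 0)) / (1 + θ₀ * min k 1)^n
              + R₀^2 :=
  stmt_3_general c₀ γ M hc₀ hγ
end

section
/- Let H be a real Hilbert space, A : H → H a continuous linear self-adjoint operator with ⟨Au, u⟩ ≥ c₀‖u‖² for all u ∈ H and some c₀ > 0, N : H → H any map, γ > 0, k > 0. Then for any given data u_n, u_{n−1} ∈ H, q_n, q_{n−1} ∈ ℝ, and F ∈ H, there exist a unique u_{n+1} ∈ H and a unique q_{n+1} ∈ ℝ satisfying the coupled equations (3u_{n+1} − 4u_n + u_{n−1})/(2k) + A u_{n+1} + q_{n+1} · N(2u_n − u_{n−1}) = F and (3q_{n+1} − 4q_n + q_{n−1})/(2k) + γ q_{n+1} − ⟨N(2u_n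 − u_{n−1}), u_{n+1}⟩ = γ. (The solution is obtained by the superposition u_{n+1} = u₁* + q_{n+1} u₂* where (3/(2k) + A)u₁* = F + (4u_n − u_{n−1})/(2k), (3/(2k) + A)u₂* = −N(2u_n − u_{n−1}), and the resulting scalar equation for q_{n+1} has the strictly positive coefficient 3/(2k) + γ + ⟨N(2u_n − u_{n−1}), (3/(2k) + A)^{−1} N(2u_n − u_{n−1})⟩.) -/
/-!
Write `c = (2k)⁻¹` and `g = N(2uₙ - uₙ₋₁)`. The scheme is the linear system
`B u + q g = b`, `(3c + γ) q - ⟪g, u⟫ = r` (with `b`, `r` collecting the data) where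
`B = 3c + A` is coercive, hence invertible by Lax–Milgram. Eliminating `u = B⁻¹ (b - q g)`
leaves the scalar equation `(3c + γ + ⟪g, B⁻¹ g⟫) q = r + ⟪g, B⁻¹ b⟫`, whose coefficient is
positive because `⟪g, B⁻¹ g⟫ = ⟪B v, v⟫ ≥ 0` for `v = B⁻¹ g`.
-/

open scoped RealInnerProductSpace

section

variable {H : Type*} [NormedAddCommGroup H] [InnerProductSpace ℝ H]

theorem exists_continuousLinearEquiv_of_coercive [CompleteSpace H] (B : H →L[ℝ] H) {C : ℝ}
    (hC : 0 < C) (hB : ∀ x, C * ‖x‖ ^ 2 ≤ ⟪B x, x⟫) :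
    ∃ E : H ≃L[ℝ] H, ∀ x, E x = B x := by
  have hcoer : IsCoercive ((innerSL ℝ).comp B) :=
    ⟨C, hC, fun x => by simpa [pow_two, mul_assoc] using hB x⟩
  refine ⟨hcoer.continuousLinearEquivOfBilin, fun x => ext_inner_right ℝ fun y => ?_⟩
  rw [hcoer.continuousLinearEquivOfBilin_apply]
  rfl

theorem inner_symm_self_nonneg (E : H ≃L[ℝ] H) (hE : ∀ v, 0 ≤ ⟪E v, v⟫) (g : H) :
    0 ≤ ⟪g, E.symm g⟫ := by
  simpa using hE (E.symm g)

theorem existsUnique_of_monotone_equiv (E : H ≃L[ℝ] H) (hE : ∀ v, 0 ≤ ⟪E v, v⟫)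
    {a : ℝ} (ha : 0 < a) (g b : H) (r : ℝ) :
    ∃! p : H × ℝ, E p.1 + p.2 • g = b ∧ a * p.2 - ⟪g, p.1⟫ = r := by
  set α := a + ⟪g, E.symm g⟫
  have hα : α ≠ 0 := (add_pos_of_pos_of_nonneg ha (inner_symm_self_nonneg E hE g)).ne'
  have solve_u : ∀ (u : H) (q : ℝ), E u + q • g = b ↔ u = E.symm (b - q • g) := fun u q => by
    rw [E.eq_symm_apply, eq_sub_iff_add_eq]
  have solve_q : ∀ q, a * q - ⟪g, E.symm (b - q • g)⟫ = r ↔ q = (r + ⟪g, E.symm b⟫) / α :=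
    fun q => by
      rw [map_sub, map_smul, inner_sub_right, real_inner_smul_right, eq_div_iff hα]
      constructor <;> intro h <;> linear_combination h
  refine ⟨(E.symm (b - ((r + ⟪g, E.symm b⟫) / α) • g), (r + ⟪g, E.symm b⟫) / α),
    ⟨(solve_u _ _).2 rfl, (solve_q _).2 rfl⟩, ?_⟩
  rintro ⟨u, q⟩ ⟨hu, hq⟩
  obtain rfl := (solve_u u q).1 hu
  obtain rfl := (solve_q q).1 hq
  rfl

end

theorem stmt_5_general {H : Type*} [NormedAddCommGroup H] [InnerProductSpace ℝ H] [CompleteSpace H]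
    (c₀ γ k : ℝ) (hc₀ : 0 < c₀) (hγ : 0 < γ) (hk : 0 < k)
    (A : H →L[ℝ] H)
    (hcoer : ∀ x : H, c₀ * ‖x‖^2 ≤ ⟪A x, x⟫)
    (N : H → H) (un un1 : H) (qn qn1 : ℝ) (F : H) :
    ∃! p : H × ℝ,
      (2*k)⁻¹ • ((3:ℝ) • p.1 - (4:ℝ) • un + un1) + A p.1
        + p.2 • N ((2:ℝ) • un - un1) = F ∧
      (3 * p.2 - 4 * qn + qn1) / (2*k) + γ * p.2
        - ⟪N ((2:ℝ) • un - un1), p.1⟫ = γ := by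
  set c : ℝ := (2*k)⁻¹
  have hc : 0 < c := by positivity
  set B : H →L[ℝ] H := (3 * c) • ContinuousLinearMap.id ℝ H + A
  have hB_apply : ∀ x, B x = (3 * c) • x + A x := fun x => rfl
  have hB : ∀ x, (3 * c + c₀) * ‖x‖ ^ 2 ≤ ⟪B x, x⟫ := fun x => by
    rw [hB_apply, inner_add_left, real_inner_smul_left, real_inner_self_eq_norm_sq]
    linarith [hcoer x]
  obtain ⟨E, hEB⟩ := exists_continuousLinearEquiv_of_coercive B (by positivity) hB
  have hE : ∀ v, 0 ≤ ⟪E v, v⟫ := fun v => by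
    rw [hEB]
    exact le_trans (by positivity) (hB v)
  refine (existsUnique_congr fun p => and_congr ?_ ?_).1
    (existsUnique_of_monotone_equiv E hE (by positivity : 0 < 3 * c + γ)
      (N ((2:ℝ) • un - un1)) (F + c • ((4:ℝ) • un - un1)) (γ + c * (4 * qn - qn1)))
  · rw [hEB, hB_apply]
    constructor <;> intro h <;> linear_combination (norm := module) h
  · rw [div_eq_mul_inv]
    constructor <;> intro h <;> linear_combination h

/-- Unique solvability of one step of the mean-reverting SAV-BDF2 scheme. -/
theorem stmt_5 {H : Type*} [NormedAddCommGroup H] [InnerProductSpace ℝ H] [CompleteSpace H]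
    (c₀ γ k : ℝ) (hc₀ : 0 < c₀) (hγ : 0 < γ) (hk : 0 < k)
    (A : H →L[ℝ] H)
    (hsym : ∀ x y : H, ⟪A x, y⟫ = ⟪x, A y⟫)
    (hcoer : ∀ x : H, c₀ * ‖x‖^2 ≤ ⟪A x, x⟫)
    (N : H → H) (un un1 : H) (qn qn1 : ℝ) (F : H) :
    ∃! p : H × ℝ,
      (2*k)⁻¹ • ((3:ℝ) • p.1 - (4:ℝ) • un + un1) + A p.1
        + p.2 • N ((2:ℝ) • un - un1) = F ∧
      (3 * p.2 - 4 * qn + qn1) / (2*k) + γ * p.2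
        - ⟪N ((2:ℝ) • un - un1), p.1⟫ = γ :=
  stmt_5_general c₀ γ k hc₀ hγ hk A hcoer N un un1 qn qn1 F
end

section
/- Let E : ℕ → ℝ with Eₙ ≥ 0 for all n, and let α > 0, β ≥ 0, δ ≥ 0, and 0 ≤ ρ < 1/(1+α). Suppose (1+α) E_{n+1} ≤ Eₙ + β ρⁿ + δ for all n ≥ 1. Then for all n ≥ 1, E_{n+1} ≤ (1+α)^{−n} (E₁ + βρ/(1 − ρ(1+α))) + δ/α. In particular limsup_{n→∞} Eₙ ≤ δ/α. -/
/-!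
With `q = 1 + α` and `D = β / (1 - ρ q)`, the shifted energy `Fₙ = Eₙ - δ/α + D ρⁿ` absorbs both
forcing terms: `q Fₙ₊₁ ≤ Fₙ`, because `δ/α` is the fixed point of `x ↦ (x + δ)/q` and
`D (1 - ρ q) = β`. Hence `Fₙ₊₁ ≤ F₁ / qⁿ`, and discarding the nonnegative `δ/(α qⁿ)` and `D ρⁿ⁺¹`
gives the bound, whose right-hand side tends to `δ/α`.
-/

open Filter Topology

section Contraction

variable {K : Type*} [Field K] [LinearOrder K] [IsStrictOrderedRing K]

theorem le_div_pow_of_mul_succ_le {F : ℕ → K} {q : K} (hq : 0 < q)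
    (h : ∀ n, 1 ≤ n → q * F (n + 1) ≤ F n) (n : ℕ) : F (n + 1) ≤ F 1 / q ^ n := by
  induction n with
  | zero => simp
  | succ n ih =>
    rw [le_div_iff₀ (by positivity)]
    calc F (n + 1 + 1) * q ^ (n + 1) = q ^ n * (q * F (n + 1 + 1)) := by ring
      _ ≤ q ^ n * F (n + 1) := by gcongr; exact h _ (by omega)
      _ ≤ F 1 := (le_div_iff₀' (by positivity)).mp ih

theorem mul_shifted_succ_le {E : ℕ → K} {α β δ ρ D : K} (hα : α ≠ 0)
    (hD : D * (1 - ρ * (1 + α)) = β) {n : ℕ}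
    (hrec : (1 + α) * E (n + 1) ≤ E n + β * ρ ^ n + δ) :
    (1 + α) * (E (n + 1) - δ / α + D * ρ ^ (n + 1)) ≤ E n - δ / α + D * ρ ^ n := by
  have hfix : (1 + α) * (δ / α) = δ / α + δ := by field_simp
  have hgeom : (1 + α) * (D * ρ ^ (n + 1)) = D * ρ ^ n - β * ρ ^ n := by
    rw [← hD]; ring
  linear_combination hrec - hfix + hgeom

end Contraction

theorem forced_recursion_bound {E : ℕ → ℝ} {α β δ ρ : ℝ} (hα : 0 < α) (hβ : 0 ≤ β)
    (hδ : 0 ≤ δ) (hρ0 : 0 ≤ ρ) (hρ1 : ρ < 1 / (1 + α))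
    (hrec : ∀ n, 1 ≤ n → (1 + α) * E (n + 1) ≤ E n + β * ρ ^ n + δ) (n : ℕ) :
    E (n + 1) ≤ (E 1 + β * ρ / (1 - ρ * (1 + α))) / (1 + α) ^ n + δ / α := by
  have hq : 0 < 1 + α := by linarith
  have hgap : 0 < 1 - ρ * (1 + α) := by rw [lt_div_iff₀ hq] at hρ1; linarith
  set D := β / (1 - ρ * (1 + α))
  have hD : D * (1 - ρ * (1 + α)) = β := div_mul_cancel₀ β hgap.ne'
  have hF := le_div_pow_of_mul_succ_le (F := fun n ↦ E n - δ / α + D * ρ ^ n) hq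
    (fun n _ ↦ mul_shifted_succ_le hα.ne' hD (hrec n ‹_›)) n
  have hδα : 0 ≤ δ / α / (1 + α) ^ n := by positivity
  have hDρ : 0 ≤ D * ρ ^ (n + 1) := by positivity
  simp only [pow_one, sub_div, add_div] at hF
  rw [show β * ρ / (1 - ρ * (1 + α)) = D * ρ by ring, add_div]
  linarith

theorem limsup_le_of_eventually_le_of_tendsto {ι : Type*} {l : Filter ι} [l.NeBot]
    {u v : ι → ℝ} {c : ℝ} (hu : ∀ i, 0 ≤ u i) (huv : u ≤ᶠ[l] v) (hv : Tendsto v l (𝓝 c)) :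
    limsup u l ≤ c :=
  (limsup_le_limsup huv (isCoboundedUnder_le_of_le l hu) hv.isBoundedUnder_le).trans
    hv.limsup_eq.le

/-- Discrete geometric-decay lemma: contraction plus bounded forcing with a geometrically
decaying extra term yields geometric decay to the absorbing level `δ/α`. -/
theorem stmt_6 (E : ℕ → ℝ) (hE : ∀ n, 0 ≤ E n)
    (α β δ ρ : ℝ) (hα : 0 < α) (hβ : 0 ≤ β) (hδ : 0 ≤ δ)
    (hρ0 : 0 ≤ ρ) (hρ1 : ρ < 1 / (1 + α))
    (hrec : ∀ n, 1 ≤ n → (1 + α) * E (n + 1) ≤ E n + β * ρ ^ n + δ) :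
    (∀ n, 1 ≤ n →
      E (n + 1) ≤ (E 1 + β * ρ / (1 - ρ * (1 + α))) / (1 + α) ^ n + δ / α) ∧
    Filter.limsup E Filter.atTop ≤ δ / α := by
  have hbound := forced_recursion_bound hα hβ hδ hρ0 hρ1 hrec
  refine ⟨fun n _ ↦ hbound n, ?_⟩
  have hdecay : Tendsto (fun n : ℕ ↦ (E 1 + β * ρ / (1 - ρ * (1 + α))) / (1 + α) ^ n + δ / α)
      atTop (𝓝 (δ / α)) := by
    simpa using (tendsto_const_nhds.div_atTop
      (tendsto_pow_atTop_atTop_of_one_lt (by linarith : (1 : ℝ) < 1 + α))).add_const (δ / α)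
  rw [← limsup_nat_add E 1]
  exact limsup_le_of_eventually_le_of_tendsto (fun n ↦ hE _) (Eventually.of_forall hbound)
    hdecay
end

section
/- Let H be a real Hilbert space and ω : ℝ → H twice continuously differentiable. For every t ∈ ℝ and k > 0, ‖(3ω(t+k) − 4ω(t) + ω(t−k))/(2k) − ω'(t+k)‖² ≤ 2k ∫_{t−k}^{t+k} ‖ω''(s)‖² ds. -/
/-!
Expanding `ω` by Taylor's formula with integral remainder around `t + k` turns the BDF2 residual
`3ω(t+k) - 4ω(t) + ω(t-k) - 2kω'(t+k)` into `∫_{t-k}^{t+k} K(s) ω''(s) ds` for the Peano kernel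
`K(s) = (s - (t-k))₊ - 4 (s - t)₊`, which satisfies `|K| ≤ 2k` on `[t-k, t+k]`. Hence the
consistency error is at most `∫_{t-k}^{t+k} ‖ω''‖`, and Cauchy–Schwarz on an interval of length
`2k` gives the bound.
-/

open intervalIntegral Set
open MeasureTheory (volume ae_of_all)

theorem sq_intervalIntegral_le_mul_integral_sq {f : ℝ → ℝ} {a b : ℝ} (hab : a ≤ b)
    (hf : IntervalIntegrable f volume a b)
    (hf2 : IntervalIntegrable (fun s => f s ^ 2) volume a b) :
    (∫ s in a..b, f s) ^ 2 ≤ (b - a) * ∫ s in a..b, f s ^ 2 := by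
  rcases hab.eq_or_lt with rfl | hlt
  · simp
  set I := ∫ s in a..b, f s
  set c := I / (b - a)
  have hL : 0 < b - a := sub_pos.mpr hlt
  -- integrate `2 c f ≤ f² + c²` with `c` the mean of `f`
  have key : ∫ s in a..b, 2 * c * f s ≤ ∫ s in a..b, (f s ^ 2 + c ^ 2) :=
    integral_mono_on hab (hf.const_mul _) (hf2.add intervalIntegrable_const)
      fun s _ => by nlinarith [sq_nonneg (f s - c)]
  rw [integral_const_mul, integral_add hf2 intervalIntegrable_const, integral_const,
    smul_eq_mul] at key
  calc I ^ 2 = (b - a) * (2 * c * I - (b - a) * c ^ 2) := by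
        simp only [c]; field_simp; ring
    _ ≤ (b - a) * ∫ s in a..b, f s ^ 2 := mul_le_mul_of_nonneg_left (by linarith) hL.le

section

variable {E : Type*} [NormedAddCommGroup E] [NormedSpace ℝ E]

theorem norm_integral_smul_le {K : ℝ → ℝ} {f : ℝ → E} {a b C : ℝ} (hab : a ≤ b)
    (hK : ∀ s ∈ Icc a b, |K s| ≤ C) (hf : IntervalIntegrable f volume a b) :
    ‖∫ s in a..b, K s • f s‖ ≤ C * ∫ s in a..b, ‖f s‖ := by
  rw [← integral_const_mul]
  refine norm_integral_le_of_norm_le hab (ae_of_all _ fun s hs => ?_) (hf.norm.const_mul C)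
  rw [norm_smul, Real.norm_eq_abs]
  exact mul_le_mul_of_nonneg_right (hK s (Ioc_subset_Icc_self hs)) (norm_nonneg _)

theorem integral_sub_smul_eq_integral_max_smul {f : ℝ → E} (hf : Continuous f) {c a b : ℝ}
    (hca : c ≤ a) (hab : a ≤ b) :
    ∫ s in a..b, (s - a) • f s = ∫ s in c..b, max (s - a) 0 • f s := by
  have hint : ∀ x y, IntervalIntegrable (fun s => max (s - a) 0 • f s) volume x y := fun x y =>
    (((continuous_id.sub continuous_const).max continuous_const).smul hf).intervalIntegrable x y
  rw [← integral_add_adjacent_intervals (hint c a) (hint a b)]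
  have hleft : ∫ s in c..a, max (s - a) 0 • f s = 0 := by
    refine (integral_congr (g := fun _ => (0 : E)) fun s hs => ?_).trans integral_zero
    rw [uIcc_of_le hca] at hs
    simp [max_eq_right (sub_nonpos.mpr hs.2)]
  rw [hleft, zero_add]
  refine integral_congr fun s hs => ?_
  rw [uIcc_of_le hab] at hs
  simp [max_eq_left (sub_nonneg.mpr hs.1)]

variable [CompleteSpace E]

theorem sub_sub_smul_deriv_eq_integral {ω : ℝ → E} (hω : ContDiff ℝ 2 ω) (a b : ℝ) :
    ω a - ω b - (a - b) • deriv ω b = ∫ s in a..b, (s - a) • deriv (deriv ω) s := by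
  have hω' : ContDiff ℝ 1 (deriv ω) := hω.deriv'
  have hderiv : ∀ s, HasDerivAt (fun u => (u - a) • deriv ω u - ω u)
      ((s - a) • deriv (deriv ω) s) s := fun s =>
    ((((hasDerivAt_id' s).sub_const a).smul
      (hω'.differentiable one_ne_zero s).hasDerivAt).sub
      (hω.differentiable two_ne_zero s).hasDerivAt).congr_deriv (by module)
  rw [integral_eq_sub_of_hasDerivAt (fun s _ => hderiv s)
    (((continuous_id.sub continuous_const).smul (hω'.continuous_deriv le_rfl)).intervalIntegrable
      a b)]
  module

def bdf2Kernel (t k s : ℝ) : ℝ := max (s - (t - k)) 0 - 4 * max (s - t) 0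

theorem abs_bdf2Kernel_le {t k s : ℝ} (hs : s ∈ Icc (t - k) (t + k)) :
    |bdf2Kernel t k s| ≤ 2 * k := by
  obtain ⟨hs₁, hs₂⟩ := hs
  rw [bdf2Kernel, abs_le]
  constructor <;> rcases max_cases (s - (t - k)) 0 with ⟨h₁, _⟩ | ⟨h₁, _⟩ <;>
    rcases max_cases (s - t) 0 with ⟨h₂, _⟩ | ⟨h₂, _⟩ <;> rw [h₁, h₂] <;> linarith

theorem bdf2_residual_eq_integral {ω : ℝ → E} (hω : ContDiff ℝ 2 ω) {t k : ℝ} (hk : 0 ≤ k) :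
    (3 : ℝ) • ω (t + k) - (4 : ℝ) • ω t + ω (t - k) - (2 * k) • deriv ω (t + k) =
      ∫ s in (t - k)..(t + k), bdf2Kernel t k s • deriv (deriv ω) s := by
  have hf : Continuous (deriv (deriv ω)) := hω.deriv'.continuous_deriv le_rfl
  have hint : ∀ a, IntervalIntegrable (fun s => max (s - a) 0 • deriv (deriv ω) s) volume
      (t - k) (t + k) := fun a =>
    (((continuous_id.sub continuous_const).max continuous_const).smul hf).intervalIntegrable _ _
  have hint4 : IntervalIntegrable (fun s => (4 : ℝ) • max (s - t) 0 • deriv (deriv ω) s) volume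
      (t - k) (t + k) := (hint t).smul (4 : ℝ)
  have hfar := sub_sub_smul_deriv_eq_integral hω (t - k) (t + k)
  have hnear := sub_sub_smul_deriv_eq_integral hω t (t + k)
  rw [integral_sub_smul_eq_integral_max_smul hf le_rfl (by linarith)] at hfar
  rw [integral_sub_smul_eq_integral_max_smul hf (c := t - k) (by linarith) (by linarith)] at hnear
  have hsplit : ∫ s in (t - k)..(t + k), bdf2Kernel t k s • deriv (deriv ω) s =
      (∫ s in (t - k)..(t + k), max (s - (t - k)) 0 • deriv (deriv ω) s) -
        (4 : ℝ) • ∫ s in (t - k)..(t + k), max (s - t) 0 • deriv (deriv ω) s := by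
    rw [← intervalIntegral.integral_smul, ← intervalIntegral.integral_sub
      (hint (t - k)) hint4]
    exact integral_congr fun s _ => by simp only [bdf2Kernel, sub_smul, mul_smul]
  rw [hsplit]
  linear_combination (norm := module) hfar - (4 : ℝ) • hnear

theorem norm_bdf2_error_le {ω : ℝ → E} (hω : ContDiff ℝ 2 ω) {t k : ℝ} (hk : 0 < k) :
    ‖(2 * k)⁻¹ • ((3 : ℝ) • ω (t + k) - (4 : ℝ) • ω t + ω (t - k)) - deriv ω (t + k)‖ ≤
      ∫ s in (t - k)..(t + k), ‖deriv (deriv ω) s‖ := by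
  have h2k : (2 * k)⁻¹ * (2 * k) = 1 := inv_mul_cancel₀ (by positivity)
  have herror : (2 * k)⁻¹ • ((3 : ℝ) • ω (t + k) - (4 : ℝ) • ω t + ω (t - k)) - deriv ω (t + k) =
      (2 * k)⁻¹ • ∫ s in (t - k)..(t + k), bdf2Kernel t k s • deriv (deriv ω) s := by
    rw [← bdf2_residual_eq_integral hω hk.le, smul_sub, smul_smul, h2k, one_smul]
  have hbound := norm_integral_smul_le (by linarith) (fun s hs => abs_bdf2Kernel_le hs)
    ((hω.deriv'.continuous_deriv le_rfl).intervalIntegrable (t - k) (t + k))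
  rw [herror, norm_smul, Real.norm_of_nonneg (by positivity)]
  calc (2 * k)⁻¹ * ‖∫ s in (t - k)..(t + k), bdf2Kernel t k s • deriv (deriv ω) s‖
      ≤ (2 * k)⁻¹ * (2 * k * ∫ s in (t - k)..(t + k), ‖deriv (deriv ω) s‖) := by gcongr
    _ = ∫ s in (t - k)..(t + k), ‖deriv (deriv ω) s‖ := by rw [← mul_assoc, h2k, one_mul]

end

/-- Bound on the BDF2 consistency error by the time-L² norm of the second derivative. -/
theorem stmt_10 {H : Type*} [NormedAddCommGroup H] [InnerProductSpace ℝ H] [CompleteSpace H]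
    (ω : ℝ → H) (hω : ContDiff ℝ 2 ω) (t k : ℝ) (hk : 0 < k) :
    ‖(2*k)⁻¹ • ((3:ℝ) • ω (t+k) - (4:ℝ) • ω t + ω (t-k)) - deriv ω (t+k)‖^2 ≤
      2 * k * ∫ s in (t-k)..(t+k), ‖deriv (deriv ω) s‖^2 := by
  have hnorm : Continuous fun s => ‖deriv (deriv ω) s‖ :=
    (hω.deriv'.continuous_deriv le_rfl).norm
  calc _ ≤ (∫ s in (t-k)..(t+k), ‖deriv (deriv ω) s‖) ^ 2 :=
        pow_le_pow_left₀ (norm_nonneg _) (norm_bdf2_error_le hω hk) 2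
    _ ≤ ((t+k) - (t-k)) * ∫ s in (t-k)..(t+k), ‖deriv (deriv ω) s‖^2 :=
        sq_intervalIntegral_le_mul_integral_sq (by linarith) (hnorm.intervalIntegrable _ _)
          ((hnorm.pow 2).intervalIntegrable _ _)
    _ = 2 * k * ∫ s in (t-k)..(t+k), ‖deriv (deriv ω) s‖^2 := by ring
end
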